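/- The tensor product module V^φ_{α,β,ψ} = V(φ) ⊗ V'_{α,β,ψ} is generated as a Vir_B-module by the set {v_φ ⊗ v_m : m ∈ ℤ} if (α,β) ≠ (0,0), and by {v_φ ⊗ v_m : m ∈ ℤ \ {0}} if (α,β) = (0,0), where v_φ is the highest weight vector of V(φ). -/
import Mathlib


open Finsupp TensorProduct

noncomputable section

/-- Loop-Virasoro carrier: `Vir ⊗ B ≅ (⊕_{n∈ℤ} d_n ⊗ B) ⊕ (C ⊗ B)`. -/
abbrev LVir (B : Type*) [AddCommMonoid B] : Type _ := (ℤ →₀ B) × B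

variable (B : Type*) [CommRing B] [Algebra ℂ B]

/-- `[d_m ⊗ a, d_n ⊗ b] = (n-m) d_{m+n} ⊗ ab + δ_{m,-n} ((m³-m)/12) C ⊗ ab`. -/
def ldBracket (m n : ℤ) (a b : B) : LVir B :=
  (Finsupp.single (m + n) ((((n : ℂ) - (m : ℂ))) • (a * b)),
    (if m = -n then ((m : ℂ) ^ 3 - (m : ℂ)) / 12 else 0) • (a * b))

/-- The bracket of the loop-Virasoro algebra `Vir_B = Vir ⊗ B`; `C ⊗ B` is central. -/
def lvirBracket (x y : LVir B) : LVir B :=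
  x.1.sum fun m a => y.1.sum fun n b => ldBracket B m n a b

/-- Action of `d_n` on `V_{α,β}` -/
def dAct (α β : ℂ) (n : ℤ) : Module.End ℂ (ℤ →₀ ℂ) :=
  Finsupp.lsum ℂ fun k => (α + (k : ℂ) + (n : ℂ) * β) • Finsupp.lsingle (k + n)

/-- Action of `Vir_B` on `V_{α,β,ψ}`:  `(d_n ⊗ b) · v_k = ψ(b)(α + k + nβ) v_{k+n}`,
`(C ⊗ b) · v_k = 0`. -/
def lAction (α β : ℂ) (ψ : B →ₐ[ℂ] ℂ) : LVir B →ₗ[ℂ] Module.End ℂ (ℤ →₀ ℂ) :=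
  (Finsupp.lsum ℂ fun n =>
      (LinearMap.toSpanSingleton ℂ (Module.End ℂ (ℤ →₀ ℂ)) (dAct α β n)).comp ψ.toLinearMap).comp
    (LinearMap.fst ℂ (ℤ →₀ B) B)

def ActInvariant {L V : Type*} [AddCommGroup V] [Module ℂ V]
    (act : L → Module.End ℂ V) (U : Submodule ℂ V) : Prop :=
  ∀ x : L, ∀ v ∈ U, act x v ∈ U

def ActIrreducible {L V : Type*} [AddCommGroup V] [Module ℂ V]
    (act : L → Module.End ℂ V) : Prop :=
  ∀ U : Submodule ℂ V, ActInvariant act U → U = ⊥ ∨ U = ⊤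

def ActGenerates {L V : Type*} [AddCommGroup V] [Module ℂ V]
    (act : L → Module.End ℂ V) (S : Set V) : Prop :=
  ∀ U : Submodule ℂ V, ActInvariant act U → S ⊆ U → U = ⊤

/-- Data of the irreducible highest weight `Vir_B`-module `V(φ)` attached to a one-dimensional
representation `φ` of `Vir⁰_B` (given by its values `φd b = φ(d_0 ⊗ b)`, `φC b = φ(C ⊗ b)`),
with highest weight vector `hv = v_φ`. -/
structure HWRep (B : Type*) [CommRing B] [Algebra ℂ B]
    (W : Type*) [AddCommGroup W] [Module ℂ W] where
  ρ : LVir B →ₗ[ℂ] Module.End ℂ W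
  rep : ∀ x y : LVir B, ρ (lvirBracket B x y) = ρ x * ρ y - ρ y * ρ x
  hv : W
  hv_ne : hv ≠ 0
  φd : B →ₗ[ℂ] ℂ
  φC : B →ₗ[ℂ] ℂ
  hw : ∀ n : ℤ, 0 < n → ∀ b : B, ρ (Finsupp.single n b, 0) hv = 0
  wt0 : ∀ b : B, ρ (Finsupp.single 0 b, 0) hv = φd b • hv
  cen : ∀ b : B, ρ (0, b) hv = φC b • hv
  gen : ActGenerates (fun x => ρ x) {hv}
  irr : ActIrreducible (fun x => ρ x)

/-- The tensor product module `V^φ_{α,β,ψ} = V(φ) ⊗ V'_{α,β,ψ}`. -/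
def tensAct {W : Type*} [AddCommGroup W] [Module ℂ W] (D : HWRep B W)
    (α β : ℂ) (ψ : B →ₐ[ℂ] ℂ) (x : LVir B) : Module.End ℂ (W ⊗[ℂ] (ℤ →₀ ℂ)) :=
  TensorProduct.map (D.ρ x) LinearMap.id + TensorProduct.map LinearMap.id (lAction B α β ψ x)

/-- The submodule `ℂ v_0` of `V_{0,0}`. -/
def Z00 : Submodule ℂ (ℤ →₀ ℂ) := Submodule.span ℂ {Finsupp.single (0 : ℤ) (1 : ℂ)}

lemma z00_invariant (ψ : B →ₐ[ℂ] ℂ) (x : LVir B) :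
    Z00 ≤ Z00.comap (lAction B 0 0 ψ x) := by
  rw [Z00, Submodule.span_le]
  intro f hf
  rw [Set.mem_singleton_iff] at hf
  subst hf
  have hd : ∀ n : ℤ, dAct 0 0 n (Finsupp.single (0 : ℤ) (1 : ℂ)) = 0 := by
    intro n
    rw [dAct, Finsupp.lsum_single]
    simp
  have h0 : lAction B 0 0 ψ x (Finsupp.single (0 : ℤ) (1 : ℂ)) = 0 := by
    rw [lAction]
    simp only [LinearMap.comp_apply, LinearMap.fst_apply, Finsupp.lsum_apply, Finsupp.sum]
    rw [LinearMap.sum_apply]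
    refine Finset.sum_eq_zero fun n hn => ?_
    simp only [LinearMap.comp_apply, AlgHom.toLinearMap_apply, LinearMap.toSpanSingleton_apply,
      LinearMap.smul_apply, smul_eq_zero]
    exact Or.inr (hd n)
  exact Submodule.mem_comap.mpr (by rw [h0]; exact Submodule.zero_mem _)

/-- The induced action of `Vir_B` on the quotient `V'_{0,0,ψ} = V_{0,0}/ℂ v_0`. -/
def qAct (ψ : B →ₐ[ℂ] ℂ) (x : LVir B) : Module.End ℂ ((ℤ →₀ ℂ) ⧸ Z00) :=
  Submodule.mapQ Z00 Z00 (lAction B 0 0 ψ x) (z00_invariant B ψ x)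

/-- The tensor product module `V(φ) ⊗ V'_{0,0,ψ}`. -/
def tensQAct {W : Type*} [AddCommGroup W] [Module ℂ W] (D : HWRep B W)
    (ψ : B →ₐ[ℂ] ℂ) (x : LVir B) : Module.End ℂ (W ⊗[ℂ] ((ℤ →₀ ℂ) ⧸ Z00)) :=
  TensorProduct.map (D.ρ x) LinearMap.id + TensorProduct.map LinearMap.id (qAct B ψ x)

lemma tensor_gen_aux {W V : Type*} [AddCommGroup W] [Module ℂ W] [AddCommGroup V] [Module ℂ V]
    (ρ : LVir B →ₗ[ℂ] Module.End ℂ W) (act : LVir B → Module.End ℂ V)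
    (hv : W) (hgen : ActGenerates (fun x => ρ x) {hv})
    (T : Set V) (hT : Submodule.span ℂ T = ⊤)
    (U : Submodule ℂ (W ⊗[ℂ] V))
    (hU : ActInvariant (fun x =>
      TensorProduct.map (ρ x) LinearMap.id + TensorProduct.map LinearMap.id (act x)) U)
    (hS : ∀ t ∈ T, hv ⊗ₜ[ℂ] t ∈ U) : U = ⊤ := by
  set A : LVir B → Module.End ℂ (W ⊗[ℂ] V) := fun x =>
    TensorProduct.map (ρ x) LinearMap.id + TensorProduct.map LinearMap.id (act x) with hA
  have step1 : ∀ v : V, hv ⊗ₜ[ℂ] v ∈ U := by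
    intro v
    have h : Submodule.span ℂ T ≤ U.comap (TensorProduct.mk ℂ W V hv) :=
      Submodule.span_le.mpr fun t ht => hS t ht
    rw [hT] at h
    exact h Submodule.mem_top
  let U' : Submodule ℂ W := ⨅ v : V, U.comap ((TensorProduct.mk ℂ W V).flip v)
  have memU' : ∀ w : W, w ∈ U' ↔ ∀ v : V, w ⊗ₜ[ℂ] v ∈ U := by
    intro w
    simp [U', Submodule.mem_iInf]
  have hU'inv : ActInvariant (fun x => ρ x) U' := by
    intro x w hw
    rw [memU'] at hw ⊢
    intro v
    have h1 : A x (w ⊗ₜ[ℂ] v) ∈ U := hU x _ (hw v)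
    have h2 : A x (w ⊗ₜ[ℂ] v) = (ρ x w) ⊗ₜ[ℂ] v + w ⊗ₜ[ℂ] (act x v) := by
      simp [hA, TensorProduct.map_tmul]
    rw [h2] at h1
    have := U.sub_mem h1 (hw (act x v))
    simpa using this
  have hvU' : hv ∈ U' := (memU' hv).mpr step1
  have hU'top : U' = ⊤ := hgen U' hU'inv (by simpa using hvU')
  rw [eq_top_iff]
  refine fun z _ => TensorProduct.induction_on z U.zero_mem (fun w v => ?_)
    (fun x y hx hy => U.add_mem hx hy)
  exact (memU' w).mp (hU'top ▸ Submodule.mem_top) v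

/-- `V^φ_{α,β,ψ} = V(φ) ⊗ V'_{α,β,ψ}` is generated as a `Vir_B`-module by
`{v_φ ⊗ v_m : m ∈ ℤ}` when `(α,β) ≠ (0,0)`, and `V(φ) ⊗ (V_{0,0}/ℂ v_0)` is generated by
`{v_φ ⊗ v_m : m ∈ ℤ ∖ {0}}` in the case `(α,β) = (0,0)`. -/
theorem tensor_generated_by_top_row {W : Type*} [AddCommGroup W] [Module ℂ W]
    (D : HWRep B W) (α β : ℂ) (hα0 : 0 ≤ α.re) (hα1 : α.re < 1) (hβ : β ≠ 1)
    (ψ : B →ₐ[ℂ] ℂ) :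
    ((α, β) ≠ ((0 : ℂ), (0 : ℂ)) →
      ActGenerates (tensAct B D α β ψ)
        {z : W ⊗[ℂ] (ℤ →₀ ℂ) | ∃ m : ℤ, z = D.hv ⊗ₜ[ℂ] Finsupp.single m (1 : ℂ)}) ∧
    (α = 0 → β = 0 →
      ActGenerates (tensQAct B D ψ)
        {z : W ⊗[ℂ] ((ℤ →₀ ℂ) ⧸ Z00) | ∃ m : ℤ, m ≠ 0 ∧
          z = D.hv ⊗ₜ[ℂ] Submodule.Quotient.mk (Finsupp.single m (1 : ℂ))}) := by
  constructor
  · intro _ U hU hS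
    refine tensor_gen_aux B D.ρ (lAction B α β ψ) D.hv D.gen
      (Set.range fun m : ℤ => Finsupp.single m (1 : ℂ)) ?_ U hU ?_
    · rw [eq_top_iff]
      intro f _
      rw [← Finsupp.sum_single f, Finsupp.sum]
      refine Submodule.sum_mem _ fun m hm => ?_
      have : Finsupp.single m (f m) = (f m) • Finsupp.single m (1 : ℂ) := by
        rw [Finsupp.smul_single, smul_eq_mul, mul_one]
      rw [this]
      exact Submodule.smul_mem _ _ (Submodule.subset_span ⟨m, rfl⟩)
    · rintro t ⟨m, rfl⟩
      exact hS ⟨m, rfl⟩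
  · intro hα hβ0 U hU hS
    refine tensor_gen_aux B D.ρ (qAct B ψ) D.hv D.gen
      (Set.range fun m : ℤ =>
        (Submodule.Quotient.mk (Finsupp.single m (1 : ℂ)) : (ℤ →₀ ℂ) ⧸ Z00)) ?_ U hU ?_
    · rw [eq_top_iff]
      intro q _
      obtain ⟨f, rfl⟩ := Submodule.Quotient.mk_surjective Z00 q
      rw [show ((Submodule.Quotient.mk f) : (ℤ →₀ ℂ) ⧸ Z00) = Z00.mkQ f from rfl,
        ← Finsupp.sum_single f, map_finsuppSum, Finsupp.sum]
      refine Submodule.sum_mem _ fun m hm => ?_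
      have : Z00.mkQ (Finsupp.single m (f m))
          = (f m) • Z00.mkQ (Finsupp.single m (1 : ℂ)) := by
        rw [← map_smul, Finsupp.smul_single, smul_eq_mul, mul_one]
      rw [this]
      exact Submodule.smul_mem _ _ (Submodule.subset_span ⟨m, rfl⟩)
    · rintro t ⟨m, rfl⟩
      dsimp only
      by_cases hm : m = 0
      · subst hm
        have h0 : (Submodule.Quotient.mk (Finsupp.single (0:ℤ) (1:ℂ)) : (ℤ →₀ ℂ) ⧸ Z00) = 0 := by
          rw [Submodule.Quotient.mk_eq_zero]
          exact Submodule.subset_span rfl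
        rw [h0, TensorProduct.tmul_zero]
        exact U.zero_mem
      · exact hS ⟨m, hm, rfl⟩
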